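/- arXiv:2208.06873 — 2 statements merged into one kernel-verified Lean document; each statement's English description precedes it below -/
import Mathlib

section
/- Let s > 1. Then for every y > 0 the function ψ_s is differentiable at y and ψ_s'(y) = −(1/(2(s−1))) · y · ψ_{s−1}(y). -/
/-!
Differentiating under the integral sign gives `K_s' = -(K_{s+1} + K_{s-1}) / 2`, since
`cosh t · cosh (s t)` is the mean of `cosh ((s + 1) t)` and `cosh ((s - 1) t)`. Integrating the
derivative of `t ↦ e^{-y cosh t} sinh (s t)` over `(0, ∞)` gives the recurrence
`y (K_{s+1} - K_{s-1}) = 2 s K_s`. Together they yield `(y^s K_s)' = -y^s K_{s-1}`, and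
`Γ(s) = (s - 1) Γ(s - 1)` adjusts the normalising constants.
-/

open MeasureTheory Real Filter Set Topology

/-- The modified Bessel function of the second kind, for `y > 0` given by
`K_s(y) = ∫_0^∞ e^{−y·cosh t}·cosh(s·t) dt`. -/
noncomputable def besselK (s y : ℝ) : ℝ :=
  ∫ t in Set.Ioi (0 : ℝ), Real.exp (-(y * Real.cosh t)) * Real.cosh (s * t)

/-- `ψ_s(y) = (2^{1−s}/Γ(s))·|y|^s·K_s(|y|)` for `y ≠ 0`, and `ψ_s(0) = 1`. -/
noncomputable def psi (s : ℝ) (y : ℝ) : ℝ :=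
  if y = 0 then 1
  else (2 : ℝ) ^ (1 - s) / Real.Gamma s * |y| ^ s * besselK s |y|

lemma cosh_le_exp_abs (x : ℝ) : cosh x ≤ exp |x| := by
  rw [← cosh_abs, cosh_eq]
  linarith [exp_le_exp.2 (neg_le_self (abs_nonneg x))]

lemma abs_sinh_le_cosh (x : ℝ) : |sinh x| ≤ cosh x := by
  rw [abs_sinh, ← cosh_abs]
  exact (sinh_lt_cosh _).le

lemma sq_div_four_le_cosh {t : ℝ} (ht : 0 ≤ t) : t ^ 2 / 4 ≤ cosh t := by
  rw [cosh_eq]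
  nlinarith [quadratic_le_exp_of_nonneg ht, exp_pos (-t)]

lemma cosh_mul_cosh_mul (s t : ℝ) :
    cosh t * cosh (s * t) = (cosh ((s + 1) * t) + cosh ((s - 1) * t)) / 2 := by
  rw [add_mul, sub_mul, one_mul, cosh_add, cosh_sub]
  ring

lemma sinh_mul_sinh_mul (s t : ℝ) :
    sinh t * sinh (s * t) = (cosh ((s + 1) * t) - cosh ((s - 1) * t)) / 2 := by
  rw [add_mul, sub_mul, one_mul, cosh_add, cosh_sub]
  ring

lemma integrable_exp_neg_mul_sq_add_mul {b : ℝ} (hb : 0 < b) (c : ℝ) :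
    Integrable fun x : ℝ => exp (-b * x ^ 2 + c * x) := by
  refine (integrable_cexp_quadratic (b := (b : ℂ)) (by simpa using hb) c 0).norm.congr
    (Eventually.of_forall fun x => ?_)
  dsimp only
  rw [show -(b : ℂ) * x ^ 2 + c * x + 0 = ((-b * x ^ 2 + c * x : ℝ) : ℂ) by push_cast; ring,
    Complex.norm_exp, Complex.ofReal_re]

section Bessel

variable {y : ℝ}

lemma integrableOn_exp_neg_mul_cosh_mul_cosh (s : ℝ) (hy : 0 < y) :
    IntegrableOn (fun t => exp (-(y * cosh t)) * cosh (s * t)) (Ioi 0) := by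
  refine (integrable_exp_neg_mul_sq_add_mul (b := y / 4) (by positivity) |s|).integrableOn.mono'
    (by fun_prop) ?_
  filter_upwards [ae_restrict_mem measurableSet_Ioi] with t ht
  have ht0 : 0 ≤ t := le_of_lt ht
  have hcosh : cosh (s * t) ≤ exp (|s| * t) := by
    simpa [abs_mul, abs_of_nonneg ht0] using cosh_le_exp_abs (s * t)
  rw [norm_of_nonneg (by positivity)]
  calc exp (-(y * cosh t)) * cosh (s * t) ≤ exp (-(y * cosh t)) * exp (|s| * t) := by gcongr
    _ = exp (-(y * cosh t) + |s| * t) := (exp_add _ _).symm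
    _ ≤ exp (-(y / 4) * t ^ 2 + |s| * t) := by
      gcongr
      nlinarith [sq_div_four_le_cosh ht0]

lemma exp_neg_mul_cosh_mul_cosh_mul_cosh_eq (s : ℝ) :
    (fun t => exp (-(y * cosh t)) * cosh t * cosh (s * t)) = fun t =>
      (exp (-(y * cosh t)) * cosh ((s + 1) * t) +
        exp (-(y * cosh t)) * cosh ((s - 1) * t)) / 2 := by
  ext t
  rw [mul_assoc, cosh_mul_cosh_mul]
  ring

lemma integrableOn_exp_neg_mul_cosh_mul_cosh_mul_cosh (s : ℝ) (hy : 0 < y) :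
    IntegrableOn (fun t => exp (-(y * cosh t)) * cosh t * cosh (s * t)) (Ioi 0) := by
  rw [exp_neg_mul_cosh_mul_cosh_mul_cosh_eq]
  exact ((integrableOn_exp_neg_mul_cosh_mul_cosh _ hy).add
    (integrableOn_exp_neg_mul_cosh_mul_cosh _ hy)).div_const 2

lemma integral_exp_neg_mul_cosh_mul_cosh_mul_cosh (s : ℝ) (hy : 0 < y) :
    ∫ t in Ioi 0, exp (-(y * cosh t)) * cosh t * cosh (s * t) =
      (besselK (s + 1) y + besselK (s - 1) y) / 2 := by
  rw [exp_neg_mul_cosh_mul_cosh_mul_cosh_eq, integral_div, integral_add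
    (integrableOn_exp_neg_mul_cosh_mul_cosh _ hy) (integrableOn_exp_neg_mul_cosh_mul_cosh _ hy)]
  rfl

theorem hasDerivAt_besselK (s : ℝ) (hy : 0 < y) :
    HasDerivAt (besselK s) (-((besselK (s + 1) y + besselK (s - 1) y) / 2)) y := by
  have hdom := hasDerivAt_integral_of_dominated_loc_of_deriv_le (μ := volume.restrict (Ioi 0))
    (F := fun x t => exp (-(x * cosh t)) * cosh (s * t))
    (F' := fun x t => -(exp (-(x * cosh t)) * cosh t * cosh (s * t)))
    (bound := fun t => exp (-(y / 2 * cosh t)) * cosh t * cosh (s * t))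
    (Ioi_mem_nhds (half_lt_self hy)) (Eventually.of_forall fun x => by fun_prop)
    (integrableOn_exp_neg_mul_cosh_mul_cosh s hy) (by fun_prop) ?bound
    (integrableOn_exp_neg_mul_cosh_mul_cosh_mul_cosh s (half_pos hy))
    (ae_of_all _ fun t x _ => ?deriv)
  · rw [integral_neg, integral_exp_neg_mul_cosh_mul_cosh_mul_cosh s hy] at hdom
    exact hdom.2
  case bound =>
    refine ae_of_all _ fun t x (hx : y / 2 < x) => ?_
    rw [norm_neg, norm_of_nonneg (by positivity)]
    gcongr
  case deriv =>
    exact ((hasDerivAt_mul_const (cosh t)).fun_neg.exp.mul_const (cosh (s * t))).congr_deriv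
      (by ring)

theorem besselK_add_one_sub_besselK_sub_one (s : ℝ) (hy : 0 < y) :
    y * (besselK (s + 1) y - besselK (s - 1) y) = 2 * s * besselK s y := by
  set I : ℝ → ℝ → ℝ := fun σ t => exp (-(y * cosh t)) * cosh (σ * t) with hI
  have hI_int (σ : ℝ) : IntegrableOn (I σ) (Ioi 0) := integrableOn_exp_neg_mul_cosh_mul_cosh σ hy
  set f : ℝ → ℝ := fun t => exp (-(y * cosh t)) * sinh (s * t)
  set f' : ℝ → ℝ := fun t => s * I s t - y / 2 * (I (s + 1) t - I (s - 1) t)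
  have hf_deriv (t : ℝ) : HasDerivAt f (f' t) t := by
    have hexp := ((hasDerivAt_cosh t).const_mul y).neg.exp
    have hsinh := (hasDerivAt_sinh (s * t)).comp t ((hasDerivAt_id t).const_mul s)
    refine (hexp.mul hsinh).congr_deriv ?_
    simp only [f', hI, Function.comp_apply, Pi.neg_apply, mul_one]
    linear_combination (-y * exp (-(y * cosh t))) * sinh_mul_sinh_mul s t
  have hdiff_int := (hI_int (s + 1)).sub' (hI_int (s - 1))
  have hf'_int : IntegrableOn f' (Ioi 0) :=
    ((hI_int s).const_mul s).sub' (hdiff_int.const_mul _)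
  have hf_int : IntegrableOn f (Ioi 0) := by
    refine (hI_int s).mono' (by fun_prop) (ae_of_all _ fun t => ?_)
    rw [norm_mul, norm_of_nonneg (exp_pos _).le, norm_eq_abs]
    exact mul_le_mul_of_nonneg_left (abs_sinh_le_cosh _) (exp_pos _).le
  have hFTC := integral_Ioi_of_hasDerivAt_of_tendsto' (fun t _ => hf_deriv t) hf'_int
    (tendsto_zero_of_hasDerivAt_of_integrableOn_Ioi (fun t _ => hf_deriv t) hf'_int hf_int)
  simp only [f'] at hFTC
  rw [integral_sub ((hI_int s).const_mul s) (hdiff_int.const_mul _),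
    integral_const_mul, integral_const_mul, integral_sub (hI_int _) (hI_int _)] at hFTC
  simp only [f, mul_zero, sinh_zero, sub_zero] at hFTC
  unfold besselK
  linear_combination (-2) * hFTC

theorem hasDerivAt_rpow_mul_besselK (s : ℝ) (hy : 0 < y) :
    HasDerivAt (fun x => x ^ s * besselK s x) (-(y ^ s * besselK (s - 1) y)) y := by
  refine ((hasDerivAt_rpow_const (Or.inl hy.ne')).mul (hasDerivAt_besselK s hy)).congr_deriv ?_
  rw [rpow_sub_one hy.ne']
  field_simp
  linear_combination (-1) * besselK_add_one_sub_besselK_sub_one s hy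

end Bessel

lemma psi_eventuallyEq_of_pos {s y : ℝ} (hy : 0 < y) :
    psi s =ᶠ[𝓝 y] fun x => 2 ^ (1 - s) / Gamma s * (x ^ s * besselK s x) := by
  filter_upwards [Ioi_mem_nhds hy] with x (hx : 0 < x)
  rw [psi, if_neg hx.ne', abs_of_pos hx, mul_assoc]

/-- for `s > 1`, for every `y > 0` `ψ_s` is differentiable at `y` with
`ψ_s'(y) = −(1/(2(s−1)))·y·ψ_{s−1}(y)`. -/
theorem psi_hasDerivAt_of_one_lt (s : ℝ) (hs : 1 < s) :
    ∀ y : ℝ, 0 < y →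
      HasDerivAt (psi s) (-(1 / (2 * (s - 1)) * y * psi (s - 1) y)) y := by
  intro y hy
  have hGamma : Gamma s = (s - 1) * Gamma (s - 1) := by
    simpa using Gamma_add_one (sub_ne_zero.2 hs.ne')
  have htwo : (2 : ℝ) ^ (1 - (s - 1)) = 2 * 2 ^ (1 - s) := by
    rw [show 1 - (s - 1) = 1 + (1 - s) by ring, rpow_add two_pos, rpow_one]
  refine ((hasDerivAt_rpow_mul_besselK s hy).const_mul _).congr_of_eventuallyEq
    (psi_eventuallyEq_of_pos hy) |>.congr_deriv ?_
  rw [psi, if_neg hy.ne', abs_of_pos hy, hGamma, htwo, rpow_sub_one hy.ne']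
  field_simp
end

section
/- Let b ∈ (−1,1) and λ > 0. Let ψ : ℝ → ℝ be even, differentiable almost everywhere with ψ(y) = ψ(0) + ∫_0^y ψ'(t) dt for all y, with ∫_ℝ |y|^b·(ψ(y)² + ψ'(y)²) dy < ∞. Suppose the function y ↦ |y|^b·ψ'(y) coincides almost everywhere with an absolutely continuous function F on ℝ, and that g(y) = −|y|^{−b}·F'(y) satisfies ∫_ℝ |y|^b·g(y)² dy < ∞. Then ∫_ℝ |y|^b·( g(y) + λ·ψ(y) )² dy ≥ λ·∫_ℝ |y|^b·( ψ'(y)² + λ·ψ(y)² ) dy. -/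
/-!
Testing the weak equation `g = -w⁻¹ (w ψ')'`, `w = |y|^b`, against `ψ` and integrating by
parts gives `∫ w g ψ = ∫ w ψ'²`; the boundary terms vanish because `F ψ = w ψ' ψ` is
integrable, so its limits at `±∞` are zero. Expanding the square then leaves
`∫ w (g + λψ)² - λ ∫ w (ψ'² + λψ²) = ∫ w g² + λ ∫ w ψ'² ≥ 0`.
Integration by parts is legitimate because `ψ` and `F` are absolutely continuous: `ψ'` and
`F'` are square integrable against `|y|^b` and `|y|^(-b)` respectively, and for `|b| < 1` the
inverse weights are locally integrable, hence so are `ψ'` and `F'`.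
-/

open MeasureTheory Real Filter Set Topology

section WeightedLTwo

variable {α : Type*} [MeasurableSpace α] {μ : Measure α} {w f g : α → ℝ}

theorem integrable_mul_mul_of_integrable_mul_sq (hw : ∀ᵐ x ∂μ, 0 ≤ w x)
    (hf : Integrable (fun x => w x * f x ^ 2) μ) (hg : Integrable (fun x => w x * g x ^ 2) μ)
    (hm : AEStronglyMeasurable (fun x => w x * (f x * g x)) μ) :
    Integrable (fun x => w x * (f x * g x)) μ := by
  refine (hf.add hg).mono' hm ?_
  filter_upwards [hw] with x hx
  have hfg : |f x * g x| ≤ f x ^ 2 + g x ^ 2 := by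
    rw [abs_mul]
    nlinarith [sq_nonneg (|f x| - |g x|), sq_abs (f x), sq_abs (g x)]
  rw [Pi.add_apply, norm_mul, Real.norm_of_nonneg hx, ← mul_add, Real.norm_eq_abs]
  exact mul_le_mul_of_nonneg_left hfg hx

theorem locallyIntegrable_of_integrable_mul_sq [TopologicalSpace α] (hw : ∀ᵐ x ∂μ, 0 < w x)
    (hwf : Integrable (fun x => w x * f x ^ 2) μ)
    (hw_inv : LocallyIntegrable (fun x => (w x)⁻¹) μ) (hf : AEStronglyMeasurable f μ) :
    LocallyIntegrable f μ := by
  refine (hwf.locallyIntegrable.add hw_inv).mono hf ?_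
  filter_upwards [hw] with x hx
  -- `w f² + w⁻¹ - 2|f| = w (|f| - w⁻¹)²`
  have h1 : w x * (w x)⁻¹ = 1 := mul_inv_cancel₀ hx.ne'
  rw [Pi.add_apply, Real.norm_eq_abs, Real.norm_of_nonneg (by positivity)]
  nlinarith [mul_nonneg hx.le (sq_nonneg (|f x| - (w x)⁻¹)), sq_abs (f x), abs_nonneg (f x),
    inv_pos.2 hx]

theorem integrable_mul_sq_of_integrable_mul_add_sq (hw : ∀ᵐ x ∂μ, 0 ≤ w x)
    (h : Integrable (fun x => w x * (f x ^ 2 + g x ^ 2)) μ)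
    (hm : AEStronglyMeasurable (fun x => w x * g x ^ 2) μ) :
    Integrable (fun x => w x * g x ^ 2) μ := by
  refine h.mono' hm ?_
  filter_upwards [hw] with x hx
  rw [Real.norm_of_nonneg (by positivity)]
  gcongr
  exact le_add_of_nonneg_left (sq_nonneg _)

end WeightedLTwo

theorem locallyIntegrable_abs_rpow {r : ℝ} (hr : -1 < r) :
    LocallyIntegrable (fun x : ℝ => |x| ^ r) := by
  refine locallyIntegrable_of_norm_le_rpow (C := 1) (α := -r) (by simp) (by rw [Module.finrank_self]; push_cast; linarith)
    (ae_of_all _ fun x => ?_)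
    (continuous_abs.measurable.pow_const r).aestronglyMeasurable
  simp [Real.norm_eq_abs, abs_of_nonneg (rpow_nonneg (abs_nonneg x) r)]

theorem locallyIntegrable_of_integrable_abs_rpow_mul_sq {r : ℝ} (hr : r < 1) {f : ℝ → ℝ}
    (h : Integrable fun x => |x| ^ r * f x ^ 2) (hf : AEStronglyMeasurable f) :
    LocallyIntegrable f := by
  refine locallyIntegrable_of_integrable_mul_sq ?_ h ?_ hf
  · exact (Measure.ae_ne volume 0).mono fun x hx => rpow_pos_of_pos (abs_pos.2 hx) r
  · simpa only [← rpow_neg (abs_nonneg _)] using locallyIntegrable_abs_rpow (neg_lt_neg hr)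

theorem absolutelyContinuousOnInterval_of_eq_add_integral {f f' : ℝ → ℝ} {c : ℝ}
    (hf' : LocallyIntegrable f') (hf : ∀ x, f x = f c + ∫ t in c..x, f' t) (a b : ℝ) :
    AbsolutelyContinuousOnInterval f a b := by
  have hf'_int (x y : ℝ) : IntervalIntegrable f' volume x y :=
    (hf'.integrableOn_isCompact isCompact_uIcc).intervalIntegrable
  have hfa : f = fun x => f a + ∫ t in a..x, f' t := funext fun x => by
    rw [hf x, hf a, add_assoc,
      intervalIntegral.integral_add_adjacent_intervals (hf'_int c a) (hf'_int a x)]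
  rw [hfa]
  simpa only [AbsolutelyContinuousOnInterval, dist_add_left] using
    (hf'_int a b).absolutelyContinuousOnInterval_intervalIntegral left_mem_uIcc

theorem continuous_of_forall_absolutelyContinuousOnInterval {f : ℝ → ℝ}
    (hf : ∀ a b, AbsolutelyContinuousOnInterval f a b) : Continuous f :=
  continuous_iff_continuousAt.2 fun x => (hf (x - 1) (x + 1)).continuousOn.continuousAt <| by
    rw [uIcc_of_le (by linarith)]
    exact Icc_mem_nhds (by linarith) (by linarith)

theorem integral_eq_zero_of_intervalIntegral_eq_sub {E : Type*} [NormedAddCommGroup E]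
    [NormedSpace ℝ E] [CompleteSpace E] {f F : ℝ → E} (hf : Integrable f) (hF : Integrable F)
    (hfF : ∀ a b, ∫ x in a..b, f x = F b - F a) :
    ∫ x, f x = 0 := by
  -- `F` tends to the improper integrals of `f` at `±∞`; integrability of `F` makes both zero.
  have htop : Tendsto F atTop (𝓝 (F 0 + ∫ x in Ioi 0, f x)) :=
    (tendsto_const_nhds.add (intervalIntegral_tendsto_integral_Ioi 0 hf.integrableOn
      tendsto_id)).congr fun y => by simp [hfF]
  have hbot : Tendsto F atBot (𝓝 (F 0 - ∫ x in Iic 0, f x)) :=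
    (tendsto_const_nhds.sub (intervalIntegral_tendsto_integral_Iic 0 hf.integrableOn
      tendsto_id)).congr fun y => by simp [hfF]
  have htop0 := (hF.integrableAtFilter _).eq_zero_of_tendsto (fun s hs => by
    obtain ⟨b, hb⟩ := mem_atTop_sets.1 hs
    exact top_le_iff.1 (volume_Ici (a := b) ▸ measure_mono hb)) htop
  have hbot0 := (hF.integrableAtFilter _).eq_zero_of_tendsto (fun s hs => by
    obtain ⟨b, hb⟩ := mem_atBot_sets.1 hs
    exact top_le_iff.1 (volume_Iic (a := b) ▸ measure_mono hb)) hbot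
  rw [← intervalIntegral.integral_Iic_add_Ioi hf.integrableOn hf.integrableOn]
  calc _ = (F 0 + ∫ x in Ioi 0, f x) - (F 0 - ∫ x in Iic 0, f x) := by abel
    _ = 0 := by rw [htop0, hbot0, sub_zero]

theorem integral_weight_mul_mul_eq_integral_weight_mul_deriv_sq {w ψ F g : ℝ → ℝ}
    (hw : ∀ᵐ x, w x ≠ 0) (hψ : ∀ a b, AbsolutelyContinuousOnInterval ψ a b)
    (hF : ∀ a b, AbsolutelyContinuousOnInterval F a b)
    (hFψ : ∀ᵐ x, w x * deriv ψ x = F x) (hg : ∀ᵐ x, g x = -((w x)⁻¹ * deriv F x))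
    (hψ'2 : Integrable fun x => w x * deriv ψ x ^ 2)
    (hgψ : Integrable fun x => w x * (g x * ψ x)) (hFψ_int : Integrable fun x => F x * ψ x) :
    ∫ x, w x * (g x * ψ x) = ∫ x, w x * deriv ψ x ^ 2 := by
  have hE : (fun x => deriv F x * ψ x + F x * deriv ψ x)
      =ᵐ[volume] fun x => -(w x * (g x * ψ x)) + w x * deriv ψ x ^ 2 := by
    filter_upwards [hw, hFψ, hg] with x hwx hFx hgx
    rw [← hFx, hgx]
    field_simp
  have hgψ_neg : Integrable fun x => -(w x * (g x * ψ x)) := hgψ.neg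
  have hzero := integral_eq_zero_of_intervalIntegral_eq_sub ((hgψ_neg.add hψ'2).congr hE.symm)
    hFψ_int fun a b => (hF a b).integral_deriv_mul_eq_sub (hψ a b)
  rw [integral_congr_ae hE, integral_add hgψ_neg hψ'2, integral_neg] at hzero
  linarith

theorem mul_integral_weight_le_integral_weight_mul_add_sq_of_integral_eq {w ψ ψ' g : ℝ → ℝ}
    {lam : ℝ} (hlam : 0 ≤ lam) (hw : ∀ᵐ x, 0 ≤ w x)
    (hψ2 : Integrable (fun x => w x * ψ x ^ 2)) (hψ'2 : Integrable (fun x => w x * ψ' x ^ 2))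
    (hg2 : Integrable (fun x => w x * g x ^ 2)) (hgψ : Integrable (fun x => w x * (g x * ψ x)))
    (hgψ_eq : ∫ x, w x * (g x * ψ x) = ∫ x, w x * ψ' x ^ 2) :
    lam * ∫ x, w x * (ψ' x ^ 2 + lam * ψ x ^ 2) ≤ ∫ x, w x * (g x + lam * ψ x) ^ 2 := by
  have hL : ∫ x, w x * (ψ' x ^ 2 + lam * ψ x ^ 2)
      = (∫ x, w x * ψ' x ^ 2) + lam * ∫ x, w x * ψ x ^ 2 := by
    rw [← integral_const_mul, ← integral_add hψ'2 (hψ2.const_mul lam)]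
    congr 1 with x; ring
  have hR : ∫ x, w x * (g x + lam * ψ x) ^ 2 = (∫ x, w x * g x ^ 2)
      + 2 * lam * (∫ x, w x * (g x * ψ x)) + lam ^ 2 * ∫ x, w x * ψ x ^ 2 := by
    calc ∫ x, w x * (g x + lam * ψ x) ^ 2
        = ∫ x, (w x * g x ^ 2 + 2 * lam * (w x * (g x * ψ x))) + lam ^ 2 * (w x * ψ x ^ 2) := by
          congr 1 with x; ring
      _ = _ := by
          rw [integral_add ?_ (hψ2.const_mul _), integral_add hg2 (hgψ.const_mul _),
            integral_const_mul, integral_const_mul]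
          exact hg2.add (hgψ.const_mul _)
  have hg2_nonneg : 0 ≤ ∫ x, w x * g x ^ 2 :=
    integral_nonneg_of_ae (hw.mono fun x hx => mul_nonneg hx (sq_nonneg _))
  have hψ'2_nonneg : 0 ≤ ∫ x, w x * ψ' x ^ 2 :=
    integral_nonneg_of_ae (hw.mono fun x hx => mul_nonneg hx (sq_nonneg _))
  rw [hL, hR, hgψ_eq]
  nlinarith [mul_nonneg hlam hψ'2_nonneg]

theorem mul_integral_weight_le_integral_weight_mul_add_sq {w ψ F g : ℝ → ℝ} {lam : ℝ}
    (hlam : 0 ≤ lam) (hw : ∀ᵐ x, 0 < w x) (hw_meas : Measurable w)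
    (hψ : ∀ a b, AbsolutelyContinuousOnInterval ψ a b)
    (hF : ∀ a b, AbsolutelyContinuousOnInterval F a b)
    (hFψ : ∀ᵐ x, w x * deriv ψ x = F x) (hg : ∀ᵐ x, g x = -((w x)⁻¹ * deriv F x))
    (hψ2 : Integrable fun x => w x * ψ x ^ 2) (hψ'2 : Integrable fun x => w x * deriv ψ x ^ 2)
    (hg2 : Integrable fun x => w x * g x ^ 2) :
    lam * ∫ x, w x * (deriv ψ x ^ 2 + lam * ψ x ^ 2)
      ≤ ∫ x, w x * (g x + lam * ψ x) ^ 2 := by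
  have hψ_meas : Measurable ψ :=
    (continuous_of_forall_absolutelyContinuousOnInterval hψ).measurable
  have hg_meas : AEStronglyMeasurable g :=
    ((hw_meas.inv.mul (measurable_deriv F)).neg.aestronglyMeasurable).congr
      (hg.mono fun _ h => h.symm)
  have hw0 : ∀ᵐ x, 0 ≤ w x := hw.mono fun _ h => h.le
  have hgψ : Integrable fun x => w x * (g x * ψ x) :=
    integrable_mul_mul_of_integrable_mul_sq hw0 hg2 hψ2
      (hw_meas.aestronglyMeasurable.mul (hg_meas.mul hψ_meas.aestronglyMeasurable))
  have hFψ_int : Integrable fun x => F x * ψ x :=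
    (integrable_mul_mul_of_integrable_mul_sq hw0 hψ'2 hψ2 (by fun_prop)).congr <| by
      filter_upwards [hFψ] with x hx
      rw [← hx, mul_assoc]
  exact mul_integral_weight_le_integral_weight_mul_add_sq_of_integral_eq hlam hw0 hψ2 hψ'2 hg2
    hgψ (integral_weight_mul_mul_eq_integral_weight_mul_deriv_sq (hw.mono fun _ h => h.ne') hψ hF
    hFψ hg hψ'2 hgψ hFψ_int)

theorem weighted_second_order_lower_bound_general (b : ℝ) (hb0 : -1 < b) (hb1 : b < 1)
    (lam : ℝ) (hlam : 0 < lam)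
    (ψ F g : ℝ → ℝ)
    (hψftc : ∀ y : ℝ, ψ y = ψ 0 + ∫ t in (0 : ℝ)..y, deriv ψ t)
    (hψint : Integrable (fun y : ℝ => |y| ^ b * ((ψ y) ^ 2 + (deriv ψ y) ^ 2)))
    (hF : ∀ᵐ y : ℝ ∂volume, |y| ^ b * deriv ψ y = F y)
    (hFftc : ∀ y₁ y₂ : ℝ, F y₂ - F y₁ = ∫ t in y₁..y₂, deriv F t)
    (hg : ∀ y : ℝ, g y = -(|y| ^ (-b) * deriv F y))
    (hgint : Integrable (fun y : ℝ => |y| ^ b * (g y) ^ 2)) :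
    lam * ∫ y : ℝ, |y| ^ b * ((deriv ψ y) ^ 2 + lam * (ψ y) ^ 2)
      ≤ ∫ y : ℝ, |y| ^ b * (g y + lam * ψ y) ^ 2 := by
  have hw_meas : Measurable fun y : ℝ => |y| ^ b := continuous_abs.measurable.pow_const b
  have hw0 : ∀ᵐ y : ℝ, 0 ≤ |y| ^ b := ae_of_all _ fun y => rpow_nonneg (abs_nonneg y) b
  have hψ'2 : Integrable fun y => |y| ^ b * deriv ψ y ^ 2 :=
    integrable_mul_sq_of_integrable_mul_add_sq hw0 hψint (by fun_prop)
  have hψ_ac := absolutelyContinuousOnInterval_of_eq_add_integral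
    (locallyIntegrable_of_integrable_abs_rpow_mul_sq hb1 hψ'2 (by fun_prop)) hψftc
  have hψ_meas := (continuous_of_forall_absolutelyContinuousOnInterval hψ_ac).measurable
  have hψ2 : Integrable fun y => |y| ^ b * ψ y ^ 2 :=
    integrable_mul_sq_of_integrable_mul_add_sq hw0 (by simpa only [add_comm] using hψint)
      (hw_meas.mul (hψ_meas.pow_const 2)).aestronglyMeasurable
  have hg' : ∀ y, g y = -((|y| ^ b)⁻¹ * deriv F y) := by
    simpa only [rpow_neg (abs_nonneg _)] using hg
  -- `F' = -|y|^b g`, so `F'` is square integrable against the inverse weight.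
  have hF'2 : Integrable fun y => |y| ^ (-b) * deriv F y ^ 2 := by
    refine hgint.congr ?_
    filter_upwards [Measure.ae_ne volume 0] with y hy
    have := (rpow_pos_of_pos (abs_pos.2 hy) b).ne'
    rw [hg', rpow_neg (abs_nonneg _)]
    field_simp
  have hF_ac := absolutelyContinuousOnInterval_of_eq_add_integral (f := F) (c := 0)
    (locallyIntegrable_of_integrable_abs_rpow_mul_sq (by linarith) hF'2 (by fun_prop))
    fun y => by linarith [hFftc 0 y]
  exact mul_integral_weight_le_integral_weight_mul_add_sq hlam.le
    ((Measure.ae_ne volume 0).mono fun y hy => rpow_pos_of_pos (abs_pos.2 hy) b) hw_meas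
    hψ_ac hF_ac hF (ae_of_all _ hg') hψ2 hψ'2 hgint

/-- for `b ∈ (−1,1)`, `λ > 0` and `ψ` even, absolutely continuous, with
finite weighted energy, such that `|y|^b·ψ'` agrees a.e. with an absolutely continuous
`F` and `g(y) = −|y|^{−b}·F'(y)` satisfies `∫ |y|^b·g² < ∞`, one has
`∫ |y|^b·(g + λψ)² ≥ λ·∫ |y|^b·(ψ'² + λψ²)`. -/
theorem weighted_second_order_lower_bound (b : ℝ) (hb0 : -1 < b) (hb1 : b < 1)
    (lam : ℝ) (hlam : 0 < lam)
    (ψ F g : ℝ → ℝ)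
    (hψσ : ∀ y : ℝ, ψ (-y) = ψ y)
    (hψd : ∀ᵐ y : ℝ ∂volume, DifferentiableAt ℝ ψ y)
    (hψftc : ∀ y : ℝ, ψ y = ψ 0 + ∫ t in (0 : ℝ)..y, deriv ψ t)
    (hψint : Integrable (fun y : ℝ => |y| ^ b * ((ψ y) ^ 2 + (deriv ψ y) ^ 2)))
    (hF : ∀ᵐ y : ℝ ∂volume, |y| ^ b * deriv ψ y = F y)
    (hFd : ∀ᵐ y : ℝ ∂volume, DifferentiableAt ℝ F y)
    (hFftc : ∀ y₁ y₂ : ℝ, F y₂ - F y₁ = ∫ t in y₁..y₂, deriv F t)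
    (hg : ∀ y : ℝ, g y = -(|y| ^ (-b) * deriv F y))
    (hgint : Integrable (fun y : ℝ => |y| ^ b * (g y) ^ 2)) :
    lam * ∫ y : ℝ, |y| ^ b * ((deriv ψ y) ^ 2 + lam * (ψ y) ^ 2)
      ≤ ∫ y : ℝ, |y| ^ b * (g y + lam * ψ y) ^ 2 :=
  weighted_second_order_lower_bound_general b hb0 hb1 lam hlam ψ F g hψftc hψint hF hFftc hg hgint
end
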